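/- arXiv:1509.08323 — 2 statements merged into one kernel-verified Lean document; each statement's English description precedes it below -/
import Mathlib

section
/- For every integer n ≥ 1, the border rank of the matrix multiplication tensor M_{⟨n,2,2⟩} is at least 3n. -/
/-- A simple (rank-one) tensor in coordinates: `(u ⊗ v ⊗ w)_{ijk} = u_i v_j w_k`. -/
def simpleTensor {ι₁ ι₂ ι₃ : Type} (u : ι₁ → ℂ) (v : ι₂ → ℂ) (w : ι₃ → ℂ) :
    ι₁ → ι₂ → ι₃ → ℂ :=
  fun i j k => u i * v j * w k

/-- The set of tensors of rank at most `r`: sums of `r` simple tensors. -/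
def rankAtMost (ι₁ ι₂ ι₃ : Type) (r : ℕ) : Set (ι₁ → ι₂ → ι₃ → ℂ) :=
  {T | ∃ u : Fin r → ι₁ → ℂ, ∃ v : Fin r → ι₂ → ℂ, ∃ w : Fin r → ι₃ → ℂ,
    T = ∑ s : Fin r, simpleTensor (u s) (v s) (w s)}

/-- The border rank of a tensor: the least `r` such that `T` lies in the closure of the
set of tensors of rank at most `r`. -/
noncomputable def borderRank {ι₁ ι₂ ι₃ : Type} (T : ι₁ → ι₂ → ι₃ → ℂ) : ℕ :=
  sInf {r : ℕ | T ∈ closure (rankAtMost ι₁ ι₂ ι₃ r)}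

/-- The matrix multiplication tensor `M_{⟨n,m,p⟩} = ∑ x^i_j ⊗ y^j_k ⊗ z^k_i`
in coordinates: the first factor is indexed by pairs `(i,j)`, the second by `(j,k)`,
the third by `(k,i)`. -/
def matMulTensor (n m p : ℕ) :
    (Fin n × Fin m) → (Fin m × Fin p) → (Fin p × Fin n) → ℂ :=
  fun x y z => if x.2 = y.1 ∧ y.2 = z.1 ∧ z.2 = x.1 then 1 else 0

/-- The BCLRS tensor `T_{BCLRS,m} = M_{⟨m,2,2⟩} − x^1_1 ⊗ (y^1_1 ⊗ z^1_1 + y^1_2 ⊗ z^2_1)`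
(indices written 1-based in the literature, 0-based here). -/
def TBCLRS (m : ℕ) : (Fin m × Fin 2) → (Fin 2 × Fin 2) → (Fin 2 × Fin m) → ℂ :=
  fun x y z =>
    matMulTensor m 2 2 x y z -
      (if x.1.val = 0 ∧ x.2.val = 0 then 1 else 0) *
        ((if y.1.val = 0 ∧ y.2.val = 0 then 1 else 0) *
            (if z.1.val = 0 ∧ z.2.val = 0 then 1 else 0) +
          (if y.1.val = 0 ∧ y.2.val = 1 then 1 else 0) *
            (if z.1.val = 1 ∧ z.2.val = 0 then 1 else 0))

/-!
Strassen's equation. Contracting the middle factor of `T ∈ ℂ^N ⊗ ℂ^β ⊗ ℂ^N` with covectors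
`φ, ψ, χ` gives `N × N` matrices `T(φ), T(ψ), T(χ)`, and
`det (T(ψ) adj T(φ) T(χ) - T(χ) adj T(φ) T(ψ))` vanishes on tensors of rank `r` with `2r < 3N`.
For a decomposition with `T(θ) = X diag(θ(v_s)) Y` and `A = T(φ) = XY` invertible, the matrix
`P = Y adj(A) X` satisfies `P² = det A • P` and has rank at least `N`, so `Q = P - det A • 1`
has rank at most `r - N`; since diagonal matrices commute, the commutator equals
`X (D_ψ Q D_χ - D_χ Q D_ψ) Y`, of rank at most `2 (r - N) < N`. Every other decomposition is a
limit of such generic ones along a polynomial path, and the equation is continuous, so it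
vanishes on the closure of the tensors of rank `r`. For `M⟨n,2,2⟩` with `N = 2n`, the trace and
the matrix units `E₀₁, E₁₀` give `1, 1 ⊗ E₀₁, 1 ⊗ E₁₀`, with value `det (1 ⊗ diag(1, -1)) ≠ 0`.
-/

open Matrix Polynomial

section Tensor

variable {ι₁ ι₂ ι₃ : Type}

lemma rankAtMost_mono {r r' : ℕ} (h : r ≤ r') :
    rankAtMost ι₁ ι₂ ι₃ r ⊆ rankAtMost ι₁ ι₂ ι₃ r' := by
  rintro T ⟨u, v, w, rfl⟩
  obtain ⟨k, rfl⟩ := Nat.exists_eq_add_of_le h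
  refine ⟨Fin.append u 0, Fin.append v 0, Fin.append w 0, ?_⟩
  ext a b c
  simp [Fin.sum_univ_add, simpleTensor]

lemma comp_mem_rankAtMost {κ : Type} {r : ℕ} (e : κ → ι₃) {T : ι₁ → ι₂ → ι₃ → ℂ}
    (hT : T ∈ rankAtMost ι₁ ι₂ ι₃ r) :
    (fun a b c => T a b (e c)) ∈ rankAtMost ι₁ ι₂ κ r := by
  obtain ⟨u, v, w, rfl⟩ := hT
  exact ⟨u, v, fun s => w s ∘ e, by ext; simp [simpleTensor]⟩

variable [Fintype ι₁] [Fintype ι₂]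

lemma mem_rankAtMost_card (T : ι₁ → ι₂ → ι₃ → ℂ) :
    T ∈ rankAtMost ι₁ ι₂ ι₃ (Fintype.card (ι₁ × ι₂)) := by
  classical
  let e := (Fintype.equivFin (ι₁ × ι₂)).symm
  refine ⟨fun s => Pi.single (e s).1 1, fun s => Pi.single (e s).2 1,
    fun s => T (e s).1 (e s).2, ?_⟩
  ext a b c
  rw [Finset.sum_apply, Finset.sum_apply, Finset.sum_apply, e.sum_comp
    (fun p => simpleTensor (Pi.single p.1 1) (Pi.single p.2 1) (T p.1 p.2) a b c)]
  simp [simpleTensor, Fintype.sum_prod_type, Pi.single_apply]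

theorem le_borderRank_of_continuous {T : ι₁ → ι₂ → ι₃ → ℂ} {k : ℕ}
    (f : (ι₁ → ι₂ → ι₃ → ℂ) → ℂ) (hf : Continuous f)
    (hvanish : ∀ r < k, ∀ S ∈ rankAtMost ι₁ ι₂ ι₃ r, f S = 0) (hT : f T ≠ 0) :
    k ≤ borderRank T := by
  by_contra! hk
  have hmem : T ∈ closure (rankAtMost ι₁ ι₂ ι₃ (borderRank T)) :=
    Nat.sInf_mem (s := {r | T ∈ closure (rankAtMost ι₁ ι₂ ι₃ r)})
      ⟨_, subset_closure (mem_rankAtMost_card T)⟩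
  exact hT (closure_minimal (hvanish _ hk) (isClosed_eq hf continuous_const) hmem)

end Tensor

section LinearAlgebra

variable {K m n : Type} [Field K] [Fintype n]

lemma Matrix.rank_sub_le (A B : Matrix m n K) : (A - B).rank ≤ A.rank + B.rank := by
  have hrange : LinearMap.range (A - B).mulVecLin ≤
      LinearMap.range A.mulVecLin ⊔ LinearMap.range B.mulVecLin := by
    rw [sub_eq_add_neg, Matrix.mulVecLin_add]
    refine (LinearMap.range_add_le _ _).trans (sup_le_sup_left ?_ _)
    rintro _ ⟨x, rfl⟩
    exact ⟨-x, by simp [Matrix.mulVec_neg]⟩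
  exact (Submodule.finrank_mono hrange).trans (Submodule.finrank_add_le_finrank_add_finrank _ _)

variable [DecidableEq n] {σ : Type} [Fintype σ] [DecidableEq σ]

theorem Matrix.det_commutator_adjugate_eq_zero (hσ : 2 * Fintype.card σ < 3 * Fintype.card n)
    (X : Matrix n σ K) (Y : Matrix σ n K) (hXY : (X * Y).det ≠ 0) (d₁ d₂ : σ → K) :
    (X * diagonal d₁ * Y * (X * Y).adjugate * (X * diagonal d₂ * Y)
      - X * diagonal d₂ * Y * (X * Y).adjugate * (X * diagonal d₁ * Y)).det = 0 := by
  set A := X * Y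
  set P := Y * A.adjugate * X
  set Q := P - A.det • 1
  have hPP : P * P = A.det • P := by
    calc P * P = Y * (A.adjugate * A) * A.adjugate * X := by simp only [P, A, Matrix.mul_assoc]
      _ = A.det • P := by simp [adjugate_mul, P, Matrix.mul_assoc]
  have hXPY : X * P * Y = A.det • A := by
    calc X * P * Y = A * A.adjugate * A := by simp only [P, A, Matrix.mul_assoc]
      _ = A.det • A := by simp [mul_adjugate]
  have hP : Fintype.card n ≤ P.rank := by
    calc Fintype.card n = (X * P * Y).rank := by
          rw [hXPY, rank_smul_of_mem_nonZeroDivisors _ (mem_nonZeroDivisors_of_ne_zero hXY),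
            rank_of_det_ne_zero hXY]
      _ ≤ P.rank := (rank_mul_le_left _ _).trans (rank_mul_le_right _ _)
  have hQ : Q.rank + P.rank ≤ Fintype.card σ :=
    rank_add_rank_le_card_of_mul_eq_zero (by simp [Q, sub_mul, hPP])
  have hcomm : diagonal d₁ * P * diagonal d₂ - diagonal d₂ * P * diagonal d₁
      = diagonal d₁ * Q * diagonal d₂ - diagonal d₂ * Q * diagonal d₁ := by
    simp only [Q, Matrix.mul_sub, Matrix.sub_mul, Matrix.mul_smul, Matrix.smul_mul,
      Matrix.mul_one, diagonal_mul_diagonal, mul_comm (d₁ _)]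
    abel
  have hrank : (X * (diagonal d₁ * Q * diagonal d₂ - diagonal d₂ * Q * diagonal d₁) * Y).rank
      < Fintype.card n := by
    calc _ ≤ (diagonal d₁ * Q * diagonal d₂ - diagonal d₂ * Q * diagonal d₁).rank :=
          (rank_mul_le_left _ _).trans (rank_mul_le_right _ _)
      _ ≤ Q.rank + Q.rank := (rank_sub_le _ _).trans (add_le_add
          ((rank_mul_le_left _ _).trans (rank_mul_le_right _ _))
          ((rank_mul_le_left _ _).trans (rank_mul_le_right _ _)))
      _ < Fintype.card n := by omega
  have hexpand : X * diagonal d₁ * Y * A.adjugate * (X * diagonal d₂ * Y)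
        - X * diagonal d₂ * Y * A.adjugate * (X * diagonal d₁ * Y)
      = X * (diagonal d₁ * P * diagonal d₂ - diagonal d₂ * P * diagonal d₁) * Y := by
    simp only [P, Matrix.mul_sub, Matrix.sub_mul, Matrix.mul_assoc]
  rw [hexpand, hcomm]
  by_contra hdet
  exact hrank.ne' (rank_of_det_ne_zero hdet).symm

end LinearAlgebra

section PolynomialMatrix

variable {K ι : Type} [Fintype ι] [DecidableEq ι]

theorem Matrix.coeff_det_of_natDegree_le [CommRing K] (M : Matrix ι ι K[X]) {k : ℕ}
    (h : ∀ a c, (M a c).natDegree ≤ k) :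
    M.det.coeff (Fintype.card ι * k) = (M.map fun p => p.coeff k).det := by
  simp only [det_apply, finsetSum_coeff, map_apply]
  refine Finset.sum_congr rfl fun τ _ => ?_
  rw [Units.smul_def, Units.smul_def, coeff_smul, ← Finset.card_univ,
    coeff_prod_of_natDegree_le (s := Finset.univ) _ k fun a _ => h _ _]

variable [Field K]

theorem Matrix.finite_setOf_det_eval_eq_zero (M : Matrix ι ι K[X]) {k : ℕ}
    (h : ∀ a c, (M a c).natDegree ≤ k) (hlead : (M.map fun p => p.coeff k).det ≠ 0) :
    {x : K | (M.map (eval x)).det = 0}.Finite := by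
  have hM : M.det ≠ 0 := fun h0 => hlead (by rw [← coeff_det_of_natDegree_le M h, h0, coeff_zero])
  refine (finite_setOfPred_isRoot hM).subset fun x hx => ?_
  simpa [IsRoot, ← coe_evalRingHom, RingHom.map_det] using hx

theorem finite_setOf_det_sum_cubic_eq_zero {σ : Type} [Fintype σ] (u w δ : σ → ι → K)
    (α : σ → K) {c : K} (hc : c ≠ 0) (hδ : ∀ a a', ∑ s, δ s a * δ s a' = (1 : Matrix ι ι K) a a') :
    {ε : K | (of fun a a' =>
      ∑ s, (u s a + ε * δ s a) * (α s + ε * c) * (w s a' + ε * δ s a')).det = 0}.Finite := by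
  let M : Matrix ι ι K[X] := of fun a a' =>
    ∑ s, (C (u s a) + X * C (δ s a)) * (C (α s) + X * C c) * (C (w s a') + X * C (δ s a'))
  have hdeg : ∀ a a', (M a a').natDegree ≤ 3 := fun a a' =>
    natDegree_sum_le_of_forall_le _ _ fun s _ => by compute_degree
  have coeff_three : ∀ x x' y y' z z' : K,
      ((C x + X * C x') * (C y + X * C y') * (C z + X * C z')).coeff 3 = x' * y' * z' := by
    intro x x' y y' z z'
    rw [show 3 = 1 + 1 + 1 from rfl, coeff_mul_add_eq_of_natDegree_le (by compute_degree)
      (by compute_degree), coeff_mul_add_eq_of_natDegree_le (by compute_degree) (by compute_degree)]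
    simp
  have hlead : M.map (fun p => p.coeff 3) = c • 1 := by
    ext a a'
    rw [Matrix.smul_apply, ← hδ, smul_eq_mul, Finset.mul_sum]
    simp only [M, map_apply, of_apply, finsetSum_coeff, coeff_three]
    exact Finset.sum_congr rfl fun s _ => by ring
  have heval : ∀ ε, M.map (eval ε) = of fun a a' =>
      ∑ s, (u s a + ε * δ s a) * (α s + ε * c) * (w s a' + ε * δ s a') := by
    intro ε
    ext a a'
    simp only [M, map_apply, of_apply, eval_finsetSum, eval_mul, eval_add, eval_C, eval_X]
  simpa only [heval] using finite_setOf_det_eval_eq_zero M hdeg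
    (by rw [hlead, det_smul, det_one, mul_one]; exact pow_ne_zero _ hc)

end PolynomialMatrix

section Strassen

variable {ι β σ : Type} [Fintype β] [Fintype σ]

def contractMiddle (T : ι → β → ι → ℂ) (θ : β → ℂ) : Matrix ι ι ℂ :=
  of fun a c => ∑ b, θ b * T a b c

lemma continuous_contractMiddle (θ : β → ℂ) :
    Continuous fun T : ι → β → ι → ℂ => contractMiddle T θ :=
  continuous_pi fun _ => continuous_pi fun _ => by simp only [contractMiddle, of_apply]; fun_prop

lemma contractMiddle_sum_simpleTensor_apply (u w : σ → ι → ℂ) (v : σ → β → ℂ) (θ : β → ℂ)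
    (a c : ι) :
    contractMiddle (∑ s, simpleTensor (u s) (v s) (w s)) θ a c
      = ∑ s, u s a * (θ ⬝ᵥ v s) * w s c := by
  simp only [contractMiddle, of_apply, Finset.sum_apply, simpleTensor, dotProduct,
    Finset.mul_sum, Finset.sum_mul]
  rw [Finset.sum_comm]
  exact Finset.sum_congr rfl fun _ _ => Finset.sum_congr rfl fun _ _ => by ring

variable [DecidableEq σ]

lemma contractMiddle_sum_simpleTensor (u w : σ → ι → ℂ) (v : σ → β → ℂ) (θ : β → ℂ) :
    contractMiddle (∑ s, simpleTensor (u s) (v s) (w s)) θ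
      = of (fun a s => u s a) * diagonal (fun s => θ ⬝ᵥ v s) * of (fun s c => w s c) := by
  ext a c
  rw [contractMiddle_sum_simpleTensor_apply, Matrix.mul_apply]
  simp [mul_diagonal]

variable [Fintype ι] [DecidableEq ι]

noncomputable def strassenDet (φ ψ χ : β → ℂ) (T : ι → β → ι → ℂ) : ℂ :=
  (contractMiddle T ψ * (contractMiddle T φ).adjugate * contractMiddle T χ
    - contractMiddle T χ * (contractMiddle T φ).adjugate * contractMiddle T ψ).det

lemma continuous_strassenDet (φ ψ χ : β → ℂ) :
    Continuous (strassenDet (ι := ι) φ ψ χ) := by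
  have := continuous_contractMiddle (ι := ι) φ
  have := continuous_contractMiddle (ι := ι) ψ
  have := continuous_contractMiddle (ι := ι) χ
  unfold strassenDet
  fun_prop

lemma strassenDet_sum_eq_zero_of_det_ne_zero (φ ψ χ : β → ℂ)
    (hσ : 2 * Fintype.card σ < 3 * Fintype.card ι)
    (u w : σ → ι → ℂ) (v : σ → β → ℂ) (hv : ∀ s, φ ⬝ᵥ v s ≠ 0)
    (hA : (contractMiddle (∑ s, simpleTensor (u s) (v s) (w s)) φ).det ≠ 0) :
    strassenDet φ ψ χ (∑ s, simpleTensor (u s) (v s) (w s)) = 0 := by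
  set X : Matrix ι σ ℂ := of (fun a s => u s a) * diagonal (fun s => φ ⬝ᵥ v s)
  have hslice : ∀ θ, contractMiddle (∑ s, simpleTensor (u s) (v s) (w s)) θ
      = X * diagonal (fun s => (θ ⬝ᵥ v s) / (φ ⬝ᵥ v s)) * of (fun s c => w s c) := by
    intro θ
    rw [contractMiddle_sum_simpleTensor, Matrix.mul_assoc (of _) (diagonal _) (diagonal _),
      diagonal_mul_diagonal]
    simp only [mul_div_cancel₀ _ (hv _)]
  have hφ : contractMiddle (∑ s, simpleTensor (u s) (v s) (w s)) φ = X * of (fun s c => w s c) := by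
    rw [hslice]; simp [div_self (hv _)]
  unfold strassenDet
  rw [hφ] at hA ⊢
  rw [hslice ψ, hslice χ]
  exact det_commutator_adjugate_eq_zero hσ _ _ hA _ _

lemma strassenDet_sum_eq_zero (φ ψ χ : β → ℂ) (hφ : φ ≠ 0)
    (hcard : Fintype.card ι ≤ Fintype.card σ) (hσ : 2 * Fintype.card σ < 3 * Fintype.card ι)
    (u w : σ → ι → ℂ) (v : σ → β → ℂ) :
    strassenDet φ ψ χ (∑ s, simpleTensor (u s) (v s) (w s)) = 0 := by
  classical
  obtain ⟨b₀, hb₀⟩ := Function.ne_iff.mp hφ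
  obtain ⟨e⟩ := Function.Embedding.nonempty_of_card_le hcard
  -- Perturb every factor linearly in `ε`, adding `∑ₐ eₐ ⊗ e_{b₀} ⊗ eₐ` on the summands `e a`:
  -- then `det T_ε(φ)` is a polynomial in `ε` with leading coefficient `φ b₀ ^ N`, so the
  -- perturbed decomposition is generic for all but finitely many `ε`.
  let δ : σ → ι → ℂ := fun s a => if s = e a then 1 else 0
  have hδ : ∀ a a', ∑ s, δ s a * δ s a' = (1 : Matrix ι ι ℂ) a a' := by
    intro a a'
    simp [δ, one_apply, e.injective.eq_iff, eq_comm]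
  let T : ℂ → ι → β → ι → ℂ := fun ε =>
    ∑ s, simpleTensor (u s + ε • δ s) (v s + ε • Pi.single b₀ 1) (w s + ε • δ s)
  have hα : ∀ ε s, φ ⬝ᵥ (v s + ε • Pi.single b₀ 1) = φ ⬝ᵥ v s + ε * φ b₀ := by
    intro ε s
    simp [dotProduct_add, dotProduct_smul]
  have hslice : ∀ ε, contractMiddle (T ε) φ = of fun a a' =>
      ∑ s, (u s a + ε * δ s a) * (φ ⬝ᵥ v s + ε * φ b₀) * (w s a' + ε * δ s a') := by
    intro ε
    ext a a'
    simp [T, contractMiddle_sum_simpleTensor_apply, hα]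
  have hbad : ({ε | (contractMiddle (T ε) φ).det = 0}
      ∪ {ε | ∃ s, φ ⬝ᵥ (v s + ε • Pi.single b₀ 1) = 0}).Finite := by
    refine Set.Finite.union ?_ ((Set.finite_range fun s => -(φ ⬝ᵥ v s) / φ b₀).subset ?_)
    · simpa only [hslice] using finite_setOf_det_sum_cubic_eq_zero u w δ _ hb₀ hδ
    · rintro ε ⟨s, hs⟩
      refine ⟨s, (div_eq_iff hb₀).2 ?_⟩
      rw [hα] at hs
      linear_combination -hs
  have hcont : Continuous fun ε => strassenDet φ ψ χ (T ε) :=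
    (continuous_strassenDet φ ψ χ).comp <| continuous_pi fun a => continuous_pi fun b =>
      continuous_pi fun c => by simp only [T, Finset.sum_apply, simpleTensor]; fun_prop
  have hzero := hcont.ext_on (hbad.countable.dense_compl ℂ) continuous_const fun ε hε => by
    simp only [Set.mem_compl_iff, Set.mem_union, not_or, not_exists, Set.mem_ofPred_eq] at hε
    exact strassenDet_sum_eq_zero_of_det_ne_zero φ ψ χ hσ _ _ _ hε.2 hε.1
  simpa [T] using congrFun hzero 0

lemma strassenDet_eq_zero_of_mem_rankAtMost (φ ψ χ : β → ℂ) (hφ : φ ≠ 0) {r : ℕ}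
    (hr : 2 * r < 3 * Fintype.card ι) {T : ι → β → ι → ℂ} (hT : T ∈ rankAtMost ι β ι r) :
    strassenDet φ ψ χ T = 0 := by
  obtain ⟨u, v, w, rfl⟩ := rankAtMost_mono (le_max_left r (Fintype.card ι)) hT
  exact strassenDet_sum_eq_zero φ ψ χ hφ (by simp) (by simp; omega) u w v

end Strassen

open scoped Kronecker in
lemma contractMiddle_matMulTensor (n m : ℕ) (θ : Fin m × Fin m → ℂ) :
    contractMiddle (fun a b c => matMulTensor n m m a b c.swap) θ
      = (1 : Matrix (Fin n) (Fin n) ℂ) ⊗ₖ of fun j k => θ (j, k) := by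
  ext ⟨i, j⟩ ⟨i', k⟩
  by_cases h : i = i' <;>
    simp [contractMiddle, matMulTensor, one_apply, Fintype.sum_prod_type, eq_comm, h, ite_and]

open scoped Kronecker in
lemma strassenDet_matMulTensor_ne_zero (n : ℕ) :
    strassenDet (fun b => if b.1 = b.2 then 1 else 0) (Pi.single (0, 1) 1) (Pi.single (1, 0) 1)
      (fun a b c => matMulTensor n 2 2 a b c.swap) ≠ 0 := by
  have htrace : (of fun j k : Fin 2 => if j = k then (1 : ℂ) else 0) = 1 := by
    ext j k; simp [one_apply]
  have hsub : ∀ B C : Matrix (Fin 2) (Fin 2) ℂ,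
      (1 : Matrix (Fin n) (Fin n) ℂ) ⊗ₖ B - 1 ⊗ₖ C = 1 ⊗ₖ (B - C) := by
    intro B C; ext ⟨i, j⟩ ⟨i', k⟩; simp [mul_sub]
  simp only [strassenDet, contractMiddle_matMulTensor, htrace, one_kronecker_one, adjugate_one,
    Matrix.mul_one, ← mul_kronecker_mul, hsub, det_kronecker, det_one, one_pow, one_mul]
  simp [det_fin_two, Matrix.mul_apply, Pi.single_apply]

theorem borderRank_matMul_lower_bound_general (n : ℕ) :
    3 * n ≤ borderRank (matMulTensor n 2 2) := by
  let f : ((Fin n × Fin 2) → (Fin 2 × Fin 2) → (Fin 2 × Fin n) → ℂ) → ℂ := fun T =>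
    strassenDet (fun b => if b.1 = b.2 then 1 else 0) (Pi.single (0, 1) 1) (Pi.single (1, 0) 1)
      (fun a b c => T a b c.swap)
  have hf : Continuous f := (continuous_strassenDet _ _ _).comp (by fun_prop)
  refine le_borderRank_of_continuous f hf (fun r hr S hS => ?_)
    (strassenDet_matMulTensor_ne_zero n)
  refine strassenDet_eq_zero_of_mem_rankAtMost _ _ _ (Function.ne_iff.2 ⟨(0, 0), by simp⟩)
    ?_ (comp_mem_rankAtMost Prod.swap hS)
  simp only [Fintype.card_prod, Fintype.card_fin]
  omega

/-- For every `n ≥ 1`, the border rank of `M_{⟨n,2,2⟩}` is at least `3n`. -/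
theorem borderRank_matMul_lower_bound (n : ℕ) (hn : 1 ≤ n) :
    3 * n ≤ borderRank (matMulTensor n 2 2) :=
  borderRank_matMul_lower_bound_general n
end

section
/- The border rank of the matrix multiplication tensor M_{⟨3,2,2⟩} ∈ ℂ^6⊗ℂ^4⊗ℂ^6 is at most 10. -/
/-!
Bini, Capovani, Lotti and Romani: `TBCLRS 2`, i.e. `M⟨2,2,2⟩` without its terms through `x¹₁`, is
the limit as `ε → 0` of `ε⁻¹` times a sum of five rank-one tensors with factors affine in `ε`, so
its border rank is at most `5`. `M⟨3,2,2⟩` is the sum of two coordinate restrictions of it: onto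
rows `1, 2`, and, after exchanging the two values of the inner index, onto rows `1, 3`. The first
copy misses the terms through `x¹₁`, the second those through `x¹₂`, and each supplies what the
other misses. Border rank is subadditive and does not grow under restriction.
-/

open Filter Topology

section RankAtMost

variable {ι₁ ι₂ ι₃ : Type}

theorem sum_simpleTensor_mem_rankAtMost {r : ℕ} (u : Fin r → ι₁ → ℂ) (v : Fin r → ι₂ → ℂ)
    (w : Fin r → ι₃ → ℂ) :
    ∑ s, simpleTensor (u s) (v s) (w s) ∈ rankAtMost ι₁ ι₂ ι₃ r :=
  ⟨u, v, w, rfl⟩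

theorem smul_mem_rankAtMost {r : ℕ} {T : ι₁ → ι₂ → ι₃ → ℂ} (c : ℂ)
    (hT : T ∈ rankAtMost ι₁ ι₂ ι₃ r) : c • T ∈ rankAtMost ι₁ ι₂ ι₃ r := by
  obtain ⟨u, v, w, rfl⟩ := hT
  refine ⟨fun s => c • u s, v, w, ?_⟩
  rw [Finset.smul_sum]
  refine Finset.sum_congr rfl fun s _ => ?_
  funext i j k
  simp only [simpleTensor, Pi.smul_apply, smul_eq_mul]
  ring

theorem add_mem_rankAtMost {r r' : ℕ} {T T' : ι₁ → ι₂ → ι₃ → ℂ}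
    (hT : T ∈ rankAtMost ι₁ ι₂ ι₃ r) (hT' : T' ∈ rankAtMost ι₁ ι₂ ι₃ r') :
    T + T' ∈ rankAtMost ι₁ ι₂ ι₃ (r + r') := by
  obtain ⟨u, v, w, rfl⟩ := hT
  obtain ⟨u', v', w', rfl⟩ := hT'
  refine ⟨Fin.append u u', Fin.append v v', Fin.append w w', ?_⟩
  simp only [Fin.sum_univ_add, Fin.append_left, Fin.append_right]

theorem add_mem_closure_rankAtMost {r r' : ℕ} {T T' : ι₁ → ι₂ → ι₃ → ℂ}
    (hT : T ∈ closure (rankAtMost ι₁ ι₂ ι₃ r)) (hT' : T' ∈ closure (rankAtMost ι₁ ι₂ ι₃ r')) :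
    T + T' ∈ closure (rankAtMost ι₁ ι₂ ι₃ (r + r')) :=
  map_mem_closure₂ continuous_add hT hT' fun _ hS _ hS' => add_mem_rankAtMost hS hS'

theorem mem_closure_rankAtMost_of_linear_degeneration {r : ℕ} {T : ι₁ → ι₂ → ι₃ → ℂ}
    (u₀ u₁ : Fin r → ι₁ → ℂ) (v₀ v₁ : Fin r → ι₂ → ℂ) (w₀ w₁ : Fin r → ι₃ → ℂ)
    (h₀ : ∑ s, simpleTensor (u₀ s) (v₀ s) (w₀ s) = 0)
    (h₁ : ∑ s, (simpleTensor (u₁ s) (v₀ s) (w₀ s) + simpleTensor (u₀ s) (v₁ s) (w₀ s) +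
      simpleTensor (u₀ s) (v₀ s) (w₁ s)) = T) :
    T ∈ closure (rankAtMost ι₁ ι₂ ι₃ r) := by
  set C := ∑ s, (simpleTensor (u₁ s) (v₁ s) (w₀ s) + simpleTensor (u₁ s) (v₀ s) (w₁ s) +
    simpleTensor (u₀ s) (v₁ s) (w₁ s))
  set D := ∑ s, simpleTensor (u₁ s) (v₁ s) (w₁ s)
  have expand : ∀ ε : ℂ, ∑ s, simpleTensor (u₀ s + ε • u₁ s) (v₀ s + ε • v₁ s) (w₀ s + ε • w₁ s)
      = ε • (T + ε • C + ε ^ 2 • D) := by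
    intro ε
    rw [← h₁, ← zero_add (ε • _), ← h₀]
    funext i j k
    simp only [C, D, simpleTensor, Finset.sum_apply, Pi.add_apply, Pi.smul_apply, smul_eq_mul,
      Finset.mul_sum, ← Finset.sum_add_distrib]
    exact Finset.sum_congr rfl fun s _ => by ring
  have hlim : Tendsto (fun ε : ℂ => T + ε • C + ε ^ 2 • D) (𝓝[≠] 0) (𝓝 T) := by
    have hcont : Continuous (fun ε : ℂ => T + ε • C + ε ^ 2 • D) := by fun_prop
    simpa using (hcont.tendsto 0).mono_left nhdsWithin_le_nhds
  refine mem_closure_of_tendsto hlim ?_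
  filter_upwards [self_mem_nhdsWithin] with ε (hε : ε ≠ 0)
  rw [← inv_smul_smul₀ hε (T + ε • C + ε ^ 2 • D), ← expand]
  exact smul_mem_rankAtMost _ (sum_simpleTensor_mem_rankAtMost _ _ _)

end RankAtMost

section Restriction

variable {ι₁ ι₂ ι₃ κ₁ κ₂ κ₃ : Type}

def restrictTensor (σ₁ : κ₁ → Option ι₁) (σ₂ : κ₂ → Option ι₂) (σ₃ : κ₃ → Option ι₃)
    (T : ι₁ → ι₂ → ι₃ → ℂ) : κ₁ → κ₂ → κ₃ → ℂ :=
  fun a b c => match σ₁ a, σ₂ b, σ₃ c with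
    | some i, some j, some k => T i j k
    | _, _, _ => 0

variable (σ₁ : κ₁ → Option ι₁) (σ₂ : κ₂ → Option ι₂) (σ₃ : κ₃ → Option ι₃)

theorem restrictTensor_simpleTensor (u : ι₁ → ℂ) (v : ι₂ → ℂ) (w : ι₃ → ℂ) :
    restrictTensor σ₁ σ₂ σ₃ (simpleTensor u v w) =
      simpleTensor (fun a => (σ₁ a).elim 0 u) (fun b => (σ₂ b).elim 0 v)
        (fun c => (σ₃ c).elim 0 w) := by
  funext a b c
  simp only [restrictTensor, simpleTensor]
  cases σ₁ a <;> cases σ₂ b <;> cases σ₃ c <;> simp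

theorem restrictTensor_sum {r : ℕ} (T : Fin r → ι₁ → ι₂ → ι₃ → ℂ) :
    restrictTensor σ₁ σ₂ σ₃ (∑ s, T s) = ∑ s, restrictTensor σ₁ σ₂ σ₃ (T s) := by
  funext a b c
  simp only [restrictTensor, Finset.sum_apply]
  cases σ₁ a <;> cases σ₂ b <;> cases σ₃ c <;> simp

theorem continuous_restrictTensor :
    Continuous (restrictTensor σ₁ σ₂ σ₃ : (ι₁ → ι₂ → ι₃ → ℂ) → κ₁ → κ₂ → κ₃ → ℂ) := by
  refine continuous_pi fun a => continuous_pi fun b => continuous_pi fun c => ?_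
  simp only [restrictTensor]
  cases σ₁ a <;> cases σ₂ b <;> cases σ₃ c <;> fun_prop

theorem restrictTensor_mem_rankAtMost {r : ℕ} {T : ι₁ → ι₂ → ι₃ → ℂ}
    (hT : T ∈ rankAtMost ι₁ ι₂ ι₃ r) : restrictTensor σ₁ σ₂ σ₃ T ∈ rankAtMost κ₁ κ₂ κ₃ r := by
  obtain ⟨u, v, w, rfl⟩ := hT
  simp only [restrictTensor_sum, restrictTensor_simpleTensor]
  exact sum_simpleTensor_mem_rankAtMost _ _ _

theorem restrictTensor_mem_closure_rankAtMost {r : ℕ} {T : ι₁ → ι₂ → ι₃ → ℂ}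
    (hT : T ∈ closure (rankAtMost ι₁ ι₂ ι₃ r)) :
    restrictTensor σ₁ σ₂ σ₃ T ∈ closure (rankAtMost κ₁ κ₂ κ₃ r) :=
  map_mem_closure (continuous_restrictTensor σ₁ σ₂ σ₃) hT
    fun _ hS => restrictTensor_mem_rankAtMost σ₁ σ₂ σ₃ hS

end Restriction

-- The approximate algorithm of Bini, Capovani, Lotti and Romani (1979).
theorem TBCLRS_two_mem_closure_rankAtMost_five :
    TBCLRS 2 ∈ closure (rankAtMost (Fin 2 × Fin 2) (Fin 2 × Fin 2) (Fin 2 × Fin 2) 5) := by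
  refine mem_closure_rankAtMost_of_linear_degeneration
    (u₀ := ![Pi.single (0, 1) 1, -Pi.single (1, 0) 1, -Pi.single (0, 1) 1,
      Pi.single (0, 1) 1 + Pi.single (1, 0) 1, Pi.single (1, 0) 1])
    (u₁ := ![Pi.single (1, 1) 1, Pi.single (1, 1) 1, 0, 0, 0])
    (v₀ := ![Pi.single (1, 1) 1, Pi.single (1, 0) 1, Pi.single (1, 0) 1 + Pi.single (1, 1) 1,
      Pi.single (1, 0) 1, Pi.single (1, 0) 1])
    (v₁ := ![0, 0, Pi.single (0, 0) 1 + Pi.single (0, 1) 1, Pi.single (0, 0) 1 + Pi.single (0, 1) 1,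
      Pi.single (0, 0) 1])
    (w₀ := ![Pi.single (1, 1) 1, Pi.single (0, 1) 1, Pi.single (1, 1) 1, Pi.single (1, 1) 1,
      Pi.single (0, 1) 1 - Pi.single (1, 1) 1])
    (w₁ := ![Pi.single (1, 0) 1, Pi.single (0, 0) 1, 0, Pi.single (0, 0) 1, 0]) ?_ ?_ <;>
  · funext ⟨a₁, a₂⟩ ⟨b₁, b₂⟩ ⟨c₁, c₂⟩
    fin_cases a₁ <;> fin_cases a₂ <;> fin_cases b₁ <;> fin_cases b₂ <;> fin_cases c₁ <;>
      fin_cases c₂ <;>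
      simp [Fin.sum_univ_succ, simpleTensor, TBCLRS, matMulTensor]

theorem matMulTensor_three_two_two_eq :
    matMulTensor 3 2 2 =
      restrictTensor (fun x => (![some 0, some 1, none] x.1).map (·, x.2)) some
          (fun z => (![some 0, some 1, none] z.2).map (z.1, ·)) (TBCLRS 2) +
        restrictTensor (fun x => (![some 0, none, some 1] x.1).map (·, x.2.rev))
          (fun y => some (y.1.rev, y.2))
          (fun z => (![some 0, none, some 1] z.2).map (z.1, ·)) (TBCLRS 2) := by
  funext ⟨a₁, a₂⟩ ⟨b₁, b₂⟩ ⟨c₁, c₂⟩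
  fin_cases a₁ <;> fin_cases a₂ <;> fin_cases b₁ <;> fin_cases b₂ <;> fin_cases c₁ <;>
    fin_cases c₂ <;>
    simp [restrictTensor, TBCLRS, matMulTensor]

/-- The border rank of `M_{⟨3,2,2⟩} ∈ ℂ^6 ⊗ ℂ^4 ⊗ ℂ^6` is at most `10`. -/
theorem borderRank_matMul322_le_ten : borderRank (matMulTensor 3 2 2) ≤ 10 := by
  apply Nat.sInf_le
  rw [matMulTensor_three_two_two_eq]
  exact add_mem_closure_rankAtMost (r := 5) (r' := 5)
    (restrictTensor_mem_closure_rankAtMost _ _ _ TBCLRS_two_mem_closure_rankAtMost_five)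
    (restrictTensor_mem_closure_rankAtMost _ _ _ TBCLRS_two_mem_closure_rankAtMost_five)
end
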